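/- arXiv:2405.20435 — 2 statements merged into one kernel-verified Lean document; each statement's English description precedes it below -/
import Mathlib

section
/- If a nonnegative finite function W on a state space X satisfies KW(x) := E[Df(x) W(f(x))] ≤ W(x) - U(x) for all x, where U is positive and bounded away from zero, then the function V*(x) = E_x[ Σ_{k=0}^∞ U(X_k) Π_{l=1}^k Df_l(X_{l-1}) ] is finite and satisfies V*(x) ≤ W(x) for all x. -/
open MeasureTheory ENNReal

/-- The contractive drift operator `KV(x) = E[Df(x) V(f(x))]`. -/
noncomputable def Kop {X Ω : Type*} [MeasurableSpace Ω] (μ : Measure Ω)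
    (f : Ω → X → X) (Df : Ω → X → ℝ≥0∞) : (X → ℝ≥0∞) → X → ℝ≥0∞ :=
  fun V x => ∫⁻ ω, Df ω x * V (f ω x) ∂μ

lemma sum_lintegral_le {Ω : Type*} [MeasurableSpace Ω] (μ : Measure Ω)
    {ι : Type*} (s : Finset ι) (g : ι → Ω → ℝ≥0∞) :
    ∑ i ∈ s, ∫⁻ ω, g i ω ∂μ ≤ ∫⁻ ω, ∑ i ∈ s, g i ω ∂μ := by
  classical
  induction s using Finset.cons_induction with
  | empty => simp
  | cons a s ha ih =>
      simp only [Finset.sum_cons]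
      calc (∫⁻ ω, g a ω ∂μ) + ∑ i ∈ s, ∫⁻ ω, g i ω ∂μ
          ≤ (∫⁻ ω, g a ω ∂μ) + ∫⁻ ω, ∑ i ∈ s, g i ω ∂μ := by gcongr
        _ ≤ ∫⁻ ω, g a ω + ∑ i ∈ s, g i ω ∂μ := le_lintegral_add _ _

lemma Kop_mono {X Ω : Type*} [MeasurableSpace Ω] (μ : Measure Ω)
    (f : Ω → X → X) (Df : Ω → X → ℝ≥0∞) {V V' : X → ℝ≥0∞} (h : ∀ x, V x ≤ V' x) :
    ∀ x, Kop μ f Df V x ≤ Kop μ f Df V' x := fun x =>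
  lintegral_mono fun ω => mul_le_mul_right (h _) _

/-- If `KW + U ≤ W` with `W` nonnegative finite and `U` bounded away from zero, then
`V*(x) = Σ_k K^k U (x) = E_x[Σ_k U(X_k) Π_{l=1}^k Df_l(X_{l-1})]` is finite and `V* ≤ W`. -/
theorem stmt0 {X Ω : Type*} [MeasurableSpace Ω] (μ : Measure Ω) [IsProbabilityMeasure μ]
    (f : Ω → X → X) (Df : Ω → X → ℝ≥0∞) (W U : X → ℝ≥0∞)
    (hW : ∀ x, W x < ⊤)
    (hU : ∃ c : ℝ≥0∞, 0 < c ∧ ∀ x, c ≤ U x)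
    (hdrift : ∀ x, Kop μ f Df W x + U x ≤ W x) :
    ∀ x, (∑' k : ℕ, (Kop μ f Df)^[k] U x) ≤ W x ∧
      (∑' k : ℕ, (Kop μ f Df)^[k] U x) < ⊤ := by
  set K := Kop μ f Df with hK
  have key : ∀ n : ℕ, ∀ x, ∑ k ∈ Finset.range n, K^[k] U x ≤ W x := by
    intro n
    induction n with
    | zero => intro x; simp
    | succ n ih =>
        intro x
        have h1 : ∑ k ∈ Finset.range (n + 1), K^[k] U x
            = (∑ k ∈ Finset.range n, K (K^[k] U) x) + U x := by
          rw [Finset.sum_range_succ']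
          simp [Function.iterate_succ_apply']
        rw [h1]
        have h2 : ∑ k ∈ Finset.range n, K (K^[k] U) x
            ≤ K (fun y => ∑ k ∈ Finset.range n, K^[k] U y) x := by
          calc ∑ k ∈ Finset.range n, K (K^[k] U) x
              = ∑ k ∈ Finset.range n, ∫⁻ ω, Df ω x * K^[k] U (f ω x) ∂μ := rfl
            _ ≤ ∫⁻ ω, ∑ k ∈ Finset.range n, Df ω x * K^[k] U (f ω x) ∂μ :=
                sum_lintegral_le μ _ _
            _ = ∫⁻ ω, Df ω x * ∑ k ∈ Finset.range n, K^[k] U (f ω x) ∂μ := by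
                simp [Finset.mul_sum]
        have h3 : K (fun y => ∑ k ∈ Finset.range n, K^[k] U y) x ≤ K W x :=
          Kop_mono μ f Df (fun y => ih y) x
        calc (∑ k ∈ Finset.range n, K (K^[k] U) x) + U x ≤ K W x + U x := by
              exact add_le_add_left (h2.trans h3) _
          _ ≤ W x := hdrift x
  intro x
  have hle : (∑' k : ℕ, K^[k] U x) ≤ W x := by
    refine Summable.tsum_le_of_sum_range_le ENNReal.summable (fun n => key n x)
  exact ⟨hle, lt_of_le_of_lt hle (hW x)⟩
end

section
/- For the tandem fluid network map f(x₁,x₂) = ( min((x₁ − r₁T)_+ + Z, c), ( min(x₂ + (r₁−r₂) min(T, x₁/r₁), c) − r₂ (T − x₁/r₁)_+ )_+ ) on [0,c]², conditional on the event T > (x₁+x₂)/r₂, the map is locally constant at (x₁,x₂); i.e., the local Lipschitz constant satisfies Df(x₁,x₂) ≤ 1{T ≤ (x₁+x₂)/r₂} (for interior points, with equality). -/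
open Topology ENNReal

/-- The local Lipschitz constant of `g` at `x`, relative to the set `s`. -/
noncomputable def locLipOn {E F : Type*} [PseudoEMetricSpace E] [PseudoEMetricSpace F]
    (g : E → F) (s : Set E) (x : E) : ℝ≥0∞ :=
  ⨅ t ∈ 𝓝[s] x, ⨆ y ∈ t ∩ s, ⨆ z ∈ t ∩ s, edist (g y) (g z) / edist y z

/-- The tandem fluid network map. -/
noncomputable def tandemMap (r₁ r₂ T Z c : ℝ) (p : ℝ × ℝ) : ℝ × ℝ :=
  (min (max (p.1 - r₁ * T) 0 + Z) c,
    max (min (p.2 + (r₁ - r₂) * min T (p.1 / r₁)) c - r₂ * max (T - p.1 / r₁) 0) 0)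

/-- On the event `T > (x₁ + x₂)/r₂` (the system empties before the next arrival), the tandem
fluid network map is constant on a neighborhood of `(x₁, x₂)` in `[0,c]²`; hence its local
Lipschitz constant there is `0 = 1{T ≤ (x₁+x₂)/r₂}`. -/
theorem stmt15 (c r₁ r₂ T Z : ℝ) (hc : 0 < c) (hr₂ : 0 < r₂) (hr : r₂ < r₁)
    (hT : 0 < T) (hZ : 0 ≤ Z)
    (x₁ x₂ : ℝ) (hx₁ : x₁ ∈ Set.Icc 0 c) (hx₂ : x₂ ∈ Set.Icc 0 c)
    (hempty : (x₁ + x₂) / r₂ < T) :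
    (∀ᶠ p in 𝓝[Set.Icc (0 : ℝ) c ×ˢ Set.Icc (0 : ℝ) c] (x₁, x₂),
        tandemMap r₁ r₂ T Z c p = tandemMap r₁ r₂ T Z c (x₁, x₂)) ∧
      locLipOn (tandemMap r₁ r₂ T Z c) (Set.Icc (0 : ℝ) c ×ˢ Set.Icc (0 : ℝ) c) (x₁, x₂)
        = 0 := by
  have hr₁ : 0 < r₁ := hr₂.trans hr
  have hsum : x₁ + x₂ < r₂ * T := by
    have := (div_lt_iff₀ hr₂).1 hempty
    linarith [mul_comm T r₂]
  have key : ∀ p : ℝ × ℝ, 0 ≤ p.1 → 0 ≤ p.2 → p.1 + p.2 < r₂ * T →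
      tandemMap r₁ r₂ T Z c p = (min Z c, 0) := by
    intro p hp1 hp2 hsum'
    have h1 : p.1 < r₂ * T := by linarith
    have h1' : p.1 ≤ r₁ * T := by nlinarith
    have hdivT : p.1 / r₁ ≤ T := by
      rw [div_le_iff₀ hr₁]; nlinarith
    unfold tandemMap
    have hmax1 : max (p.1 - r₁ * T) 0 = 0 := max_eq_right (by linarith)
    rw [hmax1]
    simp only [zero_add]
    congr 1
    have hminT : min T (p.1 / r₁) = p.1 / r₁ := min_eq_right hdivT
    have hmaxT : max (T - p.1 / r₁) 0 = T - p.1 / r₁ := max_eq_left (by linarith)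
    rw [hminT, hmaxT]
    apply max_eq_right
    have hle : min (p.2 + (r₁ - r₂) * (p.1 / r₁)) c ≤ p.2 + (r₁ - r₂) * (p.1 / r₁) :=
      min_le_left _ _
    have hfrac : r₁ * (p.1 / r₁) = p.1 := mul_div_cancel₀ _ hr₁.ne'
    nlinarith [hle, hfrac]
  set s : Set (ℝ × ℝ) := Set.Icc (0 : ℝ) c ×ˢ Set.Icc (0 : ℝ) c with hs
  set U : Set (ℝ × ℝ) := {p | p.1 + p.2 < r₂ * T} with hUdef
  have hUopen : IsOpen U := isOpen_lt (continuous_fst.add continuous_snd) continuous_const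
  have hxU : (x₁, x₂) ∈ U := hsum
  have hUnhds : U ∈ 𝓝[s] (x₁, x₂) :=
    mem_nhdsWithin_of_mem_nhds (hUopen.mem_nhds hxU)
  have hconst : ∀ p ∈ U ∩ s, tandemMap r₁ r₂ T Z c p = (min Z c, 0) := by
    rintro p ⟨hpU, hps⟩
    exact key p hps.1.1 hps.2.1 hpU
  have hx0 : tandemMap r₁ r₂ T Z c (x₁, x₂) = (min Z c, 0) :=
    key (x₁, x₂) hx₁.1 hx₂.1 hsum
  constructor
  · filter_upwards [hUnhds, self_mem_nhdsWithin] with p hpU hps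
    rw [hconst p ⟨hpU, hps⟩, hx0]
  · refine le_antisymm ?_ zero_le
    unfold locLipOn
    refine le_trans (iInf₂_le U hUnhds) ?_
    apply iSup₂_le; intro y hy
    apply iSup₂_le; intro z hz
    rw [hconst y hy, hconst z hz, edist_self, ENNReal.zero_div]
end
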